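/- The matrix W_{8−,4} = (−√2, −3/(2√2); 2√2, √2) has determinant 1 and normalizes the group Γ_0^*(8) generated by (1,1;0,1), W_8 = (0, −1/(2√2); 2√2, 0), and (3,1;8,3): W_{8−,4}^{-1} Γ_0^*(8) W_{8−,4} = Γ_0^*(8). -/

import Mathlib

open Matrix

abbrev SL2R := Matrix.SpecialLinearGroup (Fin 2) ℝ

noncomputable def T1 : SL2R := ⟨!![1, 1; 0, 1], by norm_num [Matrix.det_fin_two_of]⟩

noncomputable def W8 : SL2R :=
  ⟨!![0, -1 / (2 * Real.sqrt 2); 2 * Real.sqrt 2, 0], by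
    have h : Real.sqrt 2 ≠ 0 := by positivity
    rw [Matrix.det_fin_two_of, neg_div, neg_mul, div_mul_cancel₀ _ (mul_ne_zero two_ne_zero h)]
    ring⟩

noncomputable def A83 : SL2R := ⟨!![3, 1; 8, 3], by norm_num [Matrix.det_fin_two_of]⟩

/-- `Γ₀^*(8)`: the subgroup of `SL(2,ℝ)` generated by `(1,1;0,1)`, `W₈` and `(3,1;8,3)`
(together with `-I`). -/
noncomputable def Gamma0Star8 : Subgroup SL2R :=
  Subgroup.closure {T1, W8, A83, -1}

/-- The Atkin–Lehner matrix `W_{8-,4}` as an element of `SL(2,ℝ)`. -/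
noncomputable def W84 : SL2R :=
  ⟨!![-Real.sqrt 2, -3 / (2 * Real.sqrt 2); 2 * Real.sqrt 2, Real.sqrt 2], by
    have h2 : Real.sqrt 2 * Real.sqrt 2 = 2 := Real.mul_self_sqrt (by norm_num)
    have h0 : Real.sqrt 2 ≠ 0 := by positivity
    rw [Matrix.det_fin_two_of, neg_div, neg_mul, neg_mul, div_mul_cancel₀ _ (mul_ne_zero two_ne_zero h0)]
    nlinarith [h2]⟩

/-! Since `W84` has trace `0` and determinant `1`, its square is `-1`, which is central; hence
conjugation by `W84` is an involution of `SL(2, ℝ)`, and it suffices to show that it maps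
`Γ₀^*(8)` into itself. For that it is enough to express the conjugates of the generators as
words in the generators, which is a finite matrix computation with `√2`. -/

section ConjClosure

variable {G : Type*} [Group G]

theorem Subgroup.conj_mem_closure {S : Set G} {w : G}
    (hS : ∀ s ∈ S, w⁻¹ * s * w ∈ Subgroup.closure S) {g : G}
    (hg : g ∈ Subgroup.closure S) :
    w⁻¹ * g * w ∈ Subgroup.closure S := by
  have hle : Subgroup.closure S ≤ (Subgroup.closure S).comap (MulAut.conj w⁻¹).toMonoidHom :=
    (Subgroup.closure_le _).2 fun s hs => by simpa using hS s hs
  simpa using hle hg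

theorem Subgroup.image_conj_eq_of_mul_self_mem_center {H : Subgroup G} {w : G}
    (hw : w * w ∈ Subgroup.center G) (hH : ∀ g ∈ H, w⁻¹ * g * w ∈ H) :
    (fun g => w⁻¹ * g * w) '' (H : Set G) = H := by
  refine subset_antisymm (Set.image_subset_iff.2 hH) fun g hg => ⟨w⁻¹ * g * w, hH g hg, ?_⟩
  calc w⁻¹ * (w⁻¹ * g * w) * w = (w * w)⁻¹ * (g * (w * w)) := by group
    _ = g := by rw [Subgroup.mem_center_iff.1 hw g, inv_mul_cancel_left]

end ConjClosure

namespace Gamma0Star8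

open Matrix.SpecialLinearGroup

lemma coe_T1 : (T1 : Matrix (Fin 2) (Fin 2) ℝ) = !![1, 1; 0, 1] := rfl
lemma coe_W8 : (W8 : Matrix (Fin 2) (Fin 2) ℝ) = !![0, -1 / (2 * √2); 2 * √2, 0] := rfl
lemma coe_A83 : (A83 : Matrix (Fin 2) (Fin 2) ℝ) = !![3, 1; 8, 3] := rfl
lemma coe_W84 :
    (W84 : Matrix (Fin 2) (Fin 2) ℝ) = !![-√2, -3 / (2 * √2); 2 * √2, √2] := rfl

lemma W84_mul_self : W84 * W84 = -1 := by
  ext i j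
  simp only [coe_mul, coe_neg, coe_one, coe_W84]
  fin_cases i <;> fin_cases j <;> simp <;> field_simp <;> grind

lemma W84_conj_T1 : W84⁻¹ * T1 * W84 = -1 * T1⁻¹ * A83 := by
  ext i j
  simp only [coe_mul, coe_neg, coe_one, coe_inv, coe_T1, coe_A83, coe_W84,
    Matrix.adjugate_fin_two_of]
  fin_cases i <;> fin_cases j <;> simp <;> field_simp <;> grind

lemma W84_conj_W8 : W84⁻¹ * W8 * W84 = T1⁻¹ * W8 * A83⁻¹ * T1 := by
  ext i j
  simp only [coe_mul, coe_inv, coe_T1, coe_A83, coe_W84, coe_W8, Matrix.adjugate_fin_two_of]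
  fin_cases i <;> fin_cases j <;> simp <;> field_simp <;> grind

lemma W84_conj_A83 : W84⁻¹ * A83 * W84 = T1⁻¹ * A83 * T1 := by
  ext i j
  simp only [coe_mul, coe_inv, coe_T1, coe_A83, coe_W84, Matrix.adjugate_fin_two_of]
  fin_cases i <;> fin_cases j <;> simp <;> field_simp <;> grind

lemma T1_mem : T1 ∈ Gamma0Star8 := Subgroup.subset_closure (by simp)
lemma W8_mem : W8 ∈ Gamma0Star8 := Subgroup.subset_closure (by simp)
lemma A83_mem : A83 ∈ Gamma0Star8 := Subgroup.subset_closure (by simp)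
lemma neg_one_mem : (-1 : SL2R) ∈ Gamma0Star8 := Subgroup.subset_closure (by simp)

lemma W84_conj_mem {g : SL2R} (hg : g ∈ Gamma0Star8) : W84⁻¹ * g * W84 ∈ Gamma0Star8 := by
  refine Subgroup.conj_mem_closure (fun s hs => ?_) hg
  rcases hs with rfl | rfl | rfl | rfl
  · rw [W84_conj_T1]
    exact mul_mem (mul_mem neg_one_mem (inv_mem T1_mem)) A83_mem
  · rw [W84_conj_W8]
    exact mul_mem (mul_mem (mul_mem (inv_mem T1_mem) W8_mem) (inv_mem A83_mem)) T1_mem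
  · rw [W84_conj_A83]
    exact mul_mem (mul_mem (inv_mem T1_mem) A83_mem) T1_mem
  · rw [show W84⁻¹ * -1 * W84 = -1 by simp]
    exact neg_one_mem

end Gamma0Star8

theorem W84_det_and_conj_Gamma0Star8 :
    (W84 : Matrix (Fin 2) (Fin 2) ℝ).det = 1 ∧
      (fun g : SL2R => W84⁻¹ * g * W84) '' (Gamma0Star8 : Set SL2R) =
        (Gamma0Star8 : Set SL2R) := by
  refine ⟨W84.2, Subgroup.image_conj_eq_of_mul_self_mem_center ?_
    fun _ => Gamma0Star8.W84_conj_mem⟩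
  rw [Gamma0Star8.W84_mul_self]
  exact Subgroup.mem_center_iff.2 fun g => by simp
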